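/- arXiv:1511.01270 — 4 statements merged into one kernel-verified Lean document; each statement's English description precedes it below -/
import Mathlib

section
/- Let E be a real normed vector space, let x_1, …, x_J ∈ E and let t_1 < t_2 < … < t_J be real numbers satisfying the sub-sonic condition (SS) with parameter ρ ≥ 0, and let r > 0. Then for any j, k ∈ {1, …, J} and any y in the closed ball of radius r around x_j, there exists a point x in the closed ball of radius r around x_k such that ‖x − y‖ ≤ ρ·|t_j − t_k|. (Normed-space version of Lemma 4.4 of the paper; the proof uses the straight segment from y towards x_k in place of the minimizing geodesic.) -/
open Metric

/- The sub-sonic condition telescopes to `‖x k - x j‖ ≤ ρ |t j - t k|` for all `j, k < J`, and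
translating `y` by `x k - x j` moves it into the ball around `x k` by exactly that distance. -/

section SubSonic

variable {α : Type*} [PseudoMetricSpace α] {x : ℕ → α} {t : ℕ → ℝ} {ρ : ℝ}

theorem dist_le_mul_sub_of_dist_succ_le {m n : ℕ} (hmn : m ≤ n)
    (h : ∀ i, m ≤ i → i < n → dist (x (i + 1)) (x i) ≤ ρ * (t (i + 1) - t i)) :
    dist (x n) (x m) ≤ ρ * (t n - t m) := by
  induction n, hmn using Nat.le_induction with
  | base => simp
  | succ n hmn ih =>
    calc dist (x (n + 1)) (x m) ≤ dist (x (n + 1)) (x n) + dist (x n) (x m) := dist_triangle _ _ _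
      _ ≤ ρ * (t (n + 1) - t n) + ρ * (t n - t m) :=
        add_le_add (h n hmn n.lt_succ_self) (ih fun i hi hin => h i hi (hin.trans n.lt_succ_self))
      _ = ρ * (t (n + 1) - t m) := by ring

theorem dist_le_mul_abs_sub_of_dist_succ_le (hρ : 0 ≤ ρ) {J : ℕ}
    (h : ∀ i, i + 1 < J → dist (x (i + 1)) (x i) ≤ ρ * (t (i + 1) - t i))
    {j k : ℕ} (hj : j < J) (hk : k < J) :
    dist (x j) (x k) ≤ ρ * |t j - t k| := by
  wlog hkj : k ≤ j generalizing j k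
  · rw [dist_comm, abs_sub_comm]
    exact this hk hj (le_of_not_ge hkj)
  calc dist (x j) (x k) ≤ ρ * (t j - t k) :=
        dist_le_mul_sub_of_dist_succ_le hkj fun i _ hij => h i (by omega)
    _ ≤ ρ * |t j - t k| := mul_le_mul_of_nonneg_left (le_abs_self _) hρ

end SubSonic

theorem exists_mem_closedBall_dist_eq {E : Type*} [SeminormedAddCommGroup E] {a b y : E} {r : ℝ}
    (hy : y ∈ closedBall a r) : ∃ z ∈ closedBall b r, dist z y = dist b a := by
  refine ⟨y + (b - a), ?_, ?_⟩
  · rwa [mem_closedBall, dist_eq_norm, show y + (b - a) - b = y - a by abel, ← dist_eq_norm]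
  · rw [dist_eq_norm, dist_eq_norm, add_sub_cancel_left]

theorem stmt_1_general {E : Type*} [NormedAddCommGroup E]
    (J : ℕ) (x : ℕ → E) (t : ℕ → ℝ)
    (ρ : ℝ) (hρ : 0 ≤ ρ)
    (hSS : ∀ j, j + 1 < J → ‖x (j + 1) - x j‖ ≤ ρ * (t (j + 1) - t j))
    (r : ℝ) :
    ∀ j k, j < J → k < J → ∀ y ∈ closedBall (x j) r,
      ∃ z ∈ closedBall (x k) r, ‖z - y‖ ≤ ρ * |t j - t k| := by
  intro j k hj hk y hy
  obtain ⟨z, hz, hzy⟩ := exists_mem_closedBall_dist_eq (b := x k) hy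
  refine ⟨z, hz, ?_⟩
  rw [← dist_eq_norm, hzy, abs_sub_comm]
  exact dist_le_mul_abs_sub_of_dist_succ_le hρ (by simpa only [dist_eq_norm] using hSS) hk hj

/-- Normed-space version of Lemma 4.4: under the sub-sonic condition, for any point `y`
in the closed `r`-ball around `x j` there is a point `z` in the closed `r`-ball around
`x k` with `‖z - y‖ ≤ ρ |t j - t k|`. -/
theorem stmt_1 {E : Type*} [NormedAddCommGroup E] [NormedSpace ℝ E]
    (J : ℕ) (x : ℕ → E) (t : ℕ → ℝ)
    (ht : ∀ j, j + 1 < J → t j < t (j + 1))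
    (ρ : ℝ) (hρ : 0 ≤ ρ)
    (hSS : ∀ j, j + 1 < J → ‖x (j + 1) - x j‖ ≤ ρ * (t (j + 1) - t j))
    (r : ℝ) (hr : 0 < r) :
    ∀ j k, j < J → k < J → ∀ y ∈ closedBall (x j) r,
      ∃ z ∈ closedBall (x k) r, ‖z - y‖ ≤ ρ * |t j - t k| :=
  stmt_1_general J x t ρ hρ hSS r
end

section
/- Let E be a (nontrivial) real normed vector space, let Ω ⊆ E be open and bounded, let R > 0 satisfy closedBall(0, R) ⊆ Ω, and let ε ∈ (0, R]. Define Ω_ε = {x ∈ Ω : there exists y in the topological frontier of Ω with ‖x − y‖ ≤ infDist(y, closedBall(0, R)) + ε}. Then Ω_ε ∩ closedBall(0, R) = closedBall(0, R) ∖ ball(0, R − ε). In other words, inside the ball of radius R, the set Ω_ε is exactly the annulus of points at distance between R − ε and R from the origin. (Euclidean analogue of Lemma 4.7 of the paper, in which the minimizing geodesics of a simple manifold are replaced by straight rays from the origin.) -/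
/-!
Boundary points of `Ω` lie outside `closedBall 0 R`, where the distance to the ball is
`‖y‖ - R`. So if `‖x - y‖ ≤ ‖y‖ - R + ε`, the triangle inequality gives `‖x‖ ≥ R - ε`.
Conversely, the ray from `x` pointing away from the origin leaves the bounded set `Ω`, hence
crosses its frontier at some `y`, and along that ray `‖x - y‖ = ‖y‖ - ‖x‖ ≤ ‖y‖ - R + ε`.
-/

open Metric Set

theorem IsPreconnected.inter_frontier_nonempty {X : Type*} [TopologicalSpace X] {s t : Set X}
    (hs : IsPreconnected s) (hst : (s ∩ t).Nonempty) (hsdiff : (s \ t).Nonempty) :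
    (s ∩ frontier t).Nonempty := by
  by_contra! h
  have hcover : s ⊆ interior t ∪ (closure t)ᶜ := fun z hz => by
    by_cases hzt : z ∈ interior t
    · exact Or.inl hzt
    · exact Or.inr fun hzc => h.subset ⟨hz, hzc, hzt⟩
  obtain ⟨a, has, hat⟩ := hst
  obtain ⟨b, hbs, hbt⟩ := hsdiff
  obtain ⟨z, -, hzi, hzc⟩ := hs _ _ isOpen_interior isClosed_closure.isOpen_compl hcover
    ⟨a, has, (hcover has).resolve_right (not_not.2 (subset_closure hat))⟩
    ⟨b, hbs, (hcover hbs).resolve_left fun hbi => hbt (interior_subset hbi)⟩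
  exact hzc (interior_subset_closure hzi)

section NormedSpace

variable {E : Type*} [NormedAddCommGroup E] [NormedSpace ℝ E]

theorem infDist_closedBall_zero {R : ℝ} {y : E} (hR : 0 ≤ R) (hRy : R ≤ ‖y‖) :
    infDist y (closedBall 0 R) = ‖y‖ - R := by
  refine le_antisymm ?_ ((le_infDist ⟨0, mem_closedBall_self hR⟩).2 fun z hz => ?_)
  · rcases (norm_nonneg y).eq_or_lt with hy | hy
    · have hR0 : R = 0 := le_antisymm (hy ▸ hRy) hR
      simp [hR0]
    have hmem : (R / ‖y‖) • y ∈ closedBall (0 : E) R := by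
      rw [mem_closedBall_zero_iff, norm_smul, Real.norm_of_nonneg (by positivity),
        div_mul_cancel₀ _ hy.ne']
    calc infDist y (closedBall 0 R) ≤ ‖y - (R / ‖y‖) • y‖ :=
          (infDist_le_dist_of_mem hmem).trans_eq (dist_eq_norm _ _)
      _ = ‖(1 - R / ‖y‖) • y‖ := by rw [sub_smul, one_smul]
      _ = ‖y‖ - R := by
        rw [norm_smul, Real.norm_of_nonneg (sub_nonneg.2 ((div_le_one hy).2 hRy)), sub_mul,
          one_mul, div_mul_cancel₀ _ hy.ne']
  · rw [mem_closedBall_zero_iff] at hz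
    linarith [norm_sub_norm_le y z, dist_eq_norm y z]

theorem exists_nonneg_add_smul_mem_frontier {Ω : Set E} (hΩb : Bornology.IsBounded Ω)
    {x v : E} (hx : x ∈ Ω) (hv : v ≠ 0) : ∃ s : ℝ, 0 ≤ s ∧ x + s • v ∈ frontier Ω := by
  set ray : ℝ → E := fun s => x + s • v
  obtain ⟨M, hM⟩ := hΩb.subset_closedBall x
  have hfar : ray ((|M| + 1) / ‖v‖) ∉ Ω := fun h => by
    have := mem_closedBall.1 (hM h)
    rw [dist_eq_norm, add_sub_cancel_left, norm_smul, Real.norm_of_nonneg (by positivity),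
      div_mul_cancel₀ _ (norm_ne_zero_iff.2 hv)] at this
    linarith [le_abs_self M]
  obtain ⟨_, ⟨s, hs, rfl⟩, hy⟩ :=
    (isPreconnected_Ici.image ray (by fun_prop)).inter_frontier_nonempty
      ⟨x, ⟨0, self_mem_Ici, by simp [ray]⟩, hx⟩
      ⟨_, mem_image_of_mem _ (mem_Ici.2 (by positivity)), hfar⟩
  exact ⟨s, hs, hy⟩

theorem exists_mem_frontier_norm_eq_norm_add_dist [Nontrivial E] {Ω : Set E}
    (hΩb : Bornology.IsBounded Ω) {x : E} (hx : x ∈ Ω) :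
    ∃ y ∈ frontier Ω, ‖y‖ = ‖x‖ + ‖x - y‖ := by
  obtain ⟨v, hv, hxv⟩ : ∃ v : E, v ≠ 0 ∧ SameRay ℝ x v := by
    rcases eq_or_ne x 0 with rfl | hx0
    · obtain ⟨v, hv⟩ := exists_ne (0 : E)
      exact ⟨v, hv, .zero_left v⟩
    · exact ⟨x, hx0, .refl x⟩
  obtain ⟨s, hs, hy⟩ := exists_nonneg_add_smul_mem_frontier hΩb hx hv
  refine ⟨x + s • v, hy, ?_⟩
  rw [sub_add_cancel_left, norm_neg, (hxv.nonneg_smul_right hs).norm_add]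

end NormedSpace

theorem stmt_5_general {E : Type*} [NormedAddCommGroup E] [NormedSpace ℝ E] [Nontrivial E]
    (Ω : Set E) (hΩo : IsOpen Ω) (hΩb : Bornology.IsBounded Ω)
    (R : ℝ) (hRΩ : closedBall (0 : E) R ⊆ Ω)
    (ε : ℝ) :
    {p : E | p ∈ Ω ∧ ∃ y ∈ frontier Ω,
        ‖p - y‖ ≤ infDist y (closedBall (0 : E) R) + ε} ∩ closedBall (0 : E) R
      = closedBall (0 : E) R \ ball (0 : E) (R - ε) := by
  have hR_lt_norm : ∀ y ∈ frontier Ω, R < ‖y‖ := fun y hy => by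
    by_contra! hyR
    exact hΩo.inter_frontier_eq.subset ⟨hRΩ (mem_closedBall_zero_iff.2 hyR), hy⟩
  ext x
  simp only [mem_inter_iff, mem_ofPred_eq, mem_sdiff, mem_closedBall_zero_iff, mem_ball_zero_iff,
    not_lt]
  constructor
  · rintro ⟨⟨-, y, hy, hxy⟩, hxR⟩
    have hdist := infDist_closedBall_zero ((norm_nonneg x).trans hxR) (hR_lt_norm y hy).le
    exact ⟨hxR, by linarith [norm_sub_norm_le y x, norm_sub_rev y x]⟩
  · rintro ⟨hxR, hεx⟩
    have hxΩ := hRΩ (mem_closedBall_zero_iff.2 hxR)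
    obtain ⟨y, hy, hyx⟩ := exists_mem_frontier_norm_eq_norm_add_dist hΩb hxΩ
    have hdist := infDist_closedBall_zero ((norm_nonneg x).trans hxR) (hR_lt_norm y hy).le
    exact ⟨⟨hxΩ, y, hy, by linarith⟩, hxR⟩

/-- Euclidean analogue of Lemma 4.7: inside the ball of radius `R`, the region
`Ω_ε` reachable by unique continuation from the boundary data is exactly the
annulus `closedBall 0 R \ ball 0 (R - ε)`. -/
theorem stmt_5 {E : Type*} [NormedAddCommGroup E] [NormedSpace ℝ E] [Nontrivial E]
    (Ω : Set E) (hΩo : IsOpen Ω) (hΩb : Bornology.IsBounded Ω)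
    (R : ℝ) (hR : 0 < R) (hRΩ : closedBall (0 : E) R ⊆ Ω)
    (ε : ℝ) (hε0 : 0 < ε) (hεR : ε ≤ R) :
    {p : E | p ∈ Ω ∧ ∃ y ∈ frontier Ω,
        ‖p - y‖ ≤ infDist y (closedBall (0 : E) R) + ε} ∩ closedBall (0 : E) R
      = closedBall (0 : E) R \ ball (0 : E) (R - ε) :=
  stmt_5_general Ω hΩo hΩb R hRΩ ε
end

section
/- Let E be a real inner product space, let S, T ⊆ E, let t_j < t_k be real numbers and ρ ∈ [0, 1), and assume that every point of T lies within distance ρ·(t_k − t_j) of S, i.e. infDist(y, S) ≤ ρ·(t_k − t_j) for all y ∈ T. Let x ∈ S and let ν be a unit vector with ⟨z − x, ν⟩ ≤ 0 for all z ∈ S (an outward normal to S at x). Then for every t ≥ t_k the point x + (t − t_j)·ν does not belong to T. (Euclidean content of Example 6.3 of the paper: for convex sources the outgoing normal ray emitted from S_j at time t_j does not meet the later source S_k at any time t ≥ t_k, so the sub-sonic condition prevents outgoing wavefronts of convex sources from intersecting later sources.) -/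
open Metric

/-! Along the outward normal ray from `x`, the point `x + s • ν` is at distance at least `s` from
`S`: for `z ∈ S`, Cauchy–Schwarz gives `‖x + s • ν - z‖ ≥ ⟪x + s • ν - z, ν⟫ = s - ⟪z - x, ν⟫ ≥ s`.
For `s = t - t_j ≥ t_k - t_j` this exceeds `ρ (t_k - t_j)`, so the point cannot lie in `T`. -/

theorem le_infDist_add_smul_of_forall_inner_sub_nonpos {E : Type*} [NormedAddCommGroup E]
    [InnerProductSpace ℝ E] {S : Set E} {x ν : E} (hx : x ∈ S) (hν : ‖ν‖ = 1)
    (hnormal : ∀ z ∈ S, inner ℝ (z - x) ν ≤ 0) (s : ℝ) :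
    s ≤ infDist (x + s • ν) S := by
  refine (le_infDist ⟨x, hx⟩).2 fun z hz => ?_
  have hinner : inner ℝ (x + s • ν - z) ν = s - inner ℝ (z - x) ν := by
    rw [show x + s • ν - z = s • ν - (z - x) by abel, inner_sub_left, real_inner_smul_left,
      real_inner_self_eq_norm_sq, hν]
    ring
  calc s ≤ inner ℝ (x + s • ν - z) ν := by linarith [hnormal z hz]
    _ ≤ ‖x + s • ν - z‖ * ‖ν‖ := real_inner_le_norm _ _
    _ = dist (x + s • ν) z := by rw [hν, mul_one, dist_eq_norm]

theorem stmt_7_general {E : Type*} [NormedAddCommGroup E] [InnerProductSpace ℝ E]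
    (S T : Set E) (tj tk : ℝ) (htjk : tj < tk)
    (ρ : ℝ) (hρ1 : ρ < 1)
    (hsub : ∀ y ∈ T, infDist y S ≤ ρ * (tk - tj))
    (x : E) (hx : x ∈ S)
    (ν : E) (hν : ‖ν‖ = 1) (hnormal : ∀ z ∈ S, (inner ℝ (z - x) ν : ℝ) ≤ 0) :
    ∀ t : ℝ, tk ≤ t → x + (t - tj) • ν ∉ T := by
  intro t ht hyT
  have hfar := le_infDist_add_smul_of_forall_inner_sub_nonpos hx hν hnormal (t - tj)
  have hsubsonic : ρ * (tk - tj) < tk - tj := mul_lt_of_lt_one_left (sub_pos.2 htjk) hρ1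
  linarith [hsub _ hyT]

/-- Euclidean content of Example 6.3: if every point of `T` is within distance
`ρ (t_k - t_j)` of `S`, and `ν` is a unit outward normal to `S` at `x ∈ S`, then for
every `t ≥ t_k` the point `x + (t - t_j) • ν` on the outgoing normal ray does not
belong to `T`. -/
theorem stmt_7 {E : Type*} [NormedAddCommGroup E] [InnerProductSpace ℝ E]
    (S T : Set E) (tj tk : ℝ) (htjk : tj < tk)
    (ρ : ℝ) (hρ0 : 0 ≤ ρ) (hρ1 : ρ < 1)
    (hsub : ∀ y ∈ T, infDist y S ≤ ρ * (tk - tj))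
    (x : E) (hx : x ∈ S)
    (ν : E) (hν : ‖ν‖ = 1) (hnormal : ∀ z ∈ S, (inner ℝ (z - x) ν : ℝ) ≤ 0) :
    ∀ t : ℝ, tk ≤ t → x + (t - tj) • ν ∉ T :=
  stmt_7_general S T tj tk htjk ρ hρ1 hsub x hx ν hν hnormal
end

section
/- Let X be a metric space, let S ⊆ X be nonempty, let c ∈ X and R > 0 with S ⊆ closedBall(c, R), and suppose there exist two points a, b ∈ S with d(a, b) = 2R. Then c is a minimizer of the function ϱ_S(x) = sup_{y ∈ S} d(x, y): for every x ∈ X one has sup_{y ∈ S} d(c, y) ≤ sup_{y ∈ S} d(x, y), and in fact sup_{y ∈ S} d(x, y) ≥ R ≥ sup_{y ∈ S} d(c, y). (Metric content of the Lemma in Section 5 of the paper, which shows that under condition (R2) the circumcenter of the support S_j recovers the translation point x_j.) -/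
open Metric

section Circumradius

variable {X : Type*} [PseudoMetricSpace X] {S : Set X}

theorem bddAbove_range_dist_of_isBounded (hS : Bornology.IsBounded S) (x : X) :
    BddAbove (Set.range fun y : S => dist x y) := by
  obtain ⟨r, hr⟩ := hS.subset_closedBall x
  refine ⟨r, ?_⟩
  rintro _ ⟨y, rfl⟩
  exact (mem_closedBall'.mp (hr y.2))

theorem ciSup_dist_le_of_subset_closedBall [Nonempty S] {c : X} {R : ℝ}
    (hsub : S ⊆ closedBall c R) : ⨆ y : S, dist c y ≤ R :=
  ciSup_le fun y => mem_closedBall'.mp (hsub y.2)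

theorem half_dist_le_ciSup_dist (hS : Bornology.IsBounded S) {a b : X} (ha : a ∈ S) (hb : b ∈ S)
    (x : X) : dist a b / 2 ≤ ⨆ y : S, dist x y := by
  have hxa : dist x a ≤ ⨆ y : S, dist x y :=
    le_ciSup (bddAbove_range_dist_of_isBounded hS x) ⟨a, ha⟩
  have hxb : dist x b ≤ ⨆ y : S, dist x y :=
    le_ciSup (bddAbove_range_dist_of_isBounded hS x) ⟨b, hb⟩
  linarith [dist_triangle_left a b x]

end Circumradius

theorem stmt_8_general {X : Type*} [MetricSpace X] (S : Set X)
    (c : X) (R : ℝ) (hsub : S ⊆ closedBall c R)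
    (a b : X) (ha : a ∈ S) (hb : b ∈ S) (hab : dist a b = 2 * R) :
    ∀ x : X, (⨆ y : S, dist c (y : X)) ≤ (⨆ y : S, dist x (y : X)) ∧
      R ≤ (⨆ y : S, dist x (y : X)) ∧ (⨆ y : S, dist c (y : X)) ≤ R := by
  intro x
  have : Nonempty S := ⟨⟨a, ha⟩⟩
  have hcR : ⨆ y : S, dist c (y : X) ≤ R := ciSup_dist_le_of_subset_closedBall hsub
  have hRx : R ≤ ⨆ y : S, dist x (y : X) := by
    have := half_dist_le_ciSup_dist (isBounded_closedBall.subset hsub) ha hb x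
    linarith
  exact ⟨hcR.trans hRx, hRx, hcR⟩

/-- Metric content of the Lemma of Section 5: if `S ⊆ closedBall c R` contains two
points at distance `2R`, then `c` minimizes the circumradius function
`x ↦ ⨆ y : S, dist x y`, and indeed `⨆ y : S, dist x y ≥ R ≥ ⨆ y : S, dist c y`
for every `x`. -/
theorem stmt_8 {X : Type*} [MetricSpace X] (S : Set X) (hS : S.Nonempty)
    (c : X) (R : ℝ) (hR : 0 < R) (hsub : S ⊆ closedBall c R)
    (a b : X) (ha : a ∈ S) (hb : b ∈ S) (hab : dist a b = 2 * R) :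
    ∀ x : X, (⨆ y : S, dist c (y : X)) ≤ (⨆ y : S, dist x (y : X)) ∧
      R ≤ (⨆ y : S, dist x (y : X)) ∧ (⨆ y : S, dist c (y : X)) ≤ R :=
  stmt_8_general S c R hsub a b ha hb hab
end
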